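/- The Demazure–Lusztig operators are well defined and give a representation of the extended affine Hecke algebra relations: (a) for every f ∈ R and 1 ≤ i ≤ n−1, the element (1−q)f − (1 − q·x_{i+1}x_i^{−1})·(s_i f) is divisible by x_{i+1}x_i^{−1} − 1 in R, so T_i f ∈ R; (b) (T_i − q)(T_i + 1) = 0; (c) T_i T_{i+1} T_i = T_{i+1} T_i T_{i+1} and T_i T_j = T_j T_i for |i − j| ≥ 2; (d) X_j X_k = X_k X_j for all j, k, q^{−1} T_i X_i T_i = X_{i+1} for 1 ≤ i ≤ n−1, and T_i X_j = X_j T_i for j ∉ {i, i+1}. -/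

import Mathlib

noncomputable section

/-- The field `ℂ(q)` of rational functions in the indeterminate `q`. -/
abbrev KK : Type := RatFunc ℂ

/-- The ring `R = ℂ(q)[x_1^{±1}, …, x_n^{±1}]` of Laurent polynomials. -/
abbrev RL (n : ℕ) : Type := AddMonoidAlgebra KK (Fin n →₀ ℤ)

/-- The parameter `q`, an indeterminate over `ℂ`. -/
def qK : KK := RatFunc.X

/-- `q` viewed as a constant in the Laurent polynomial ring `R`. -/
def qc (n : ℕ) : RL n := AddMonoidAlgebra.single 0 qK

/-- The monomial `x^μ` for an exponent vector `μ ∈ ℤ^n`. -/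
def xpow (n : ℕ) (μ : Fin n →₀ ℤ) : RL n := AddMonoidAlgebra.single μ 1

/-- The `ℂ(q)`-linear substitution exchanging the variables `x_a` and `x_b`. -/
def sOp {n : ℕ} (a b : Fin n) (f : RL n) : RL n :=
  AddMonoidAlgebra.ofCoeff
    (Finsupp.equivMapDomain (Finsupp.equivCongrLeft (Equiv.swap a b)) f.coeff)

open scoped Classical in
/-- `divBy d a` is a quotient of `a` by `d` when `d ∣ a`, and `0` otherwise. -/
def divBy {n : ℕ} (d a : RL n) : RL n := if h : d ∣ a then h.choose else 0

/-- Exponent vector of `x_b x_a⁻¹`. -/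
def dExp {n : ℕ} (a b : Fin n) : Fin n →₀ ℤ := Finsupp.single b 1 - Finsupp.single a 1

/-- The Demazure–Lusztig operator
`T f = (f − s f)/(x_b x_a⁻¹ − 1) − q·(f − x_b x_a⁻¹·(s f))/(x_b x_a⁻¹ − 1)`
(for `a = i`, `b = i+1` this is `T_i`). -/
def DLop {n : ℕ} (a b : Fin n) (f : RL n) : RL n :=
  divBy (xpow n (dExp a b) - 1)
    ((1 - qc n) * f - (1 - qc n * xpow n (dExp a b)) * sOp a b f)

/-- The operator `X_j`: multiplication by `x_j⁻¹`. -/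
def Xop {n : ℕ} (j : Fin n) (f : RL n) : RL n := xpow n (Finsupp.single j (-1)) * f

end

/-!
On a monomial, `s_i (x^μ) = x^μ z^k` with `z = x_{i+1} x_i⁻¹` and `k = μ_i - μ_{i+1}`, so the
numerator of `T_i (x^μ)` is `x^μ ((q z - 1)(z^k - 1) + q (z - 1))`, a multiple of `z - 1`; by
additivity this gives (a). Consequently `T_i` is the restriction to `R` of the operator
`f ↦ ((1 - q) f - (1 - q z) s_i f) / (z - 1)` on the fraction field of `R`, on which `s_i` acts by
field automorphisms. There each relation becomes an identity of rational functions in `q`, the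
monomials involved and their images under the `s_i`, which hold because the `s_i` satisfy the
Coxeter relations and act on `x_{i+1} x_i⁻¹` as the simple reflections act on roots.
-/

lemma Units.sub_one_dvd_zpow_sub_one {R : Type*} [CommRing R] (u : Rˣ) (k : ℤ) :
    (u : R) - 1 ∣ ((u ^ k : Rˣ) : R) - 1 := by
  obtain ⟨m, rfl | rfl⟩ := Int.eq_nat_or_neg k
  · simpa using sub_one_dvd_pow_sub_one (u : R) m
  · have hinv : ((u ^ (-(m : ℤ)) : Rˣ) : R) * (u : R) ^ m = 1 := by
      rw [← Units.val_pow_eq_pow_val, ← Units.val_mul, zpow_neg, zpow_natCast, inv_mul_cancel,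
        Units.val_one]
    have key : ((u ^ (-(m : ℤ)) : Rˣ) : R) - 1 =
        -((u ^ (-(m : ℤ)) : Rˣ) : R) * ((u : R) ^ m - 1) := by
      linear_combination hinv
    rw [key]
    exact (sub_one_dvd_pow_sub_one _ m).mul_left _

section DemazureLusztig

variable {F : Type*} [Field F]

def demazureLusztig (σ : F →+* F) (q z f : F) : F :=
  ((1 - q) * f - (1 - q * z) * σ f) / (z - 1)

variable (σ τ : F →+* F) {q u v m : F} (f : F)

lemma demazureLusztig_quadratic (hu0 : u ≠ 0) (hu1 : u ≠ 1) (hσq : σ q = q)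
    (hσu : σ u = u⁻¹) (hσσ : σ (σ f) = f) :
    demazureLusztig σ q u (demazureLusztig σ q u f + f) - q * (demazureLusztig σ q u f + f)
      = 0 := by
  have : u - 1 ≠ 0 := sub_ne_zero.mpr hu1
  simp only [demazureLusztig, map_div₀, map_sub, map_mul, map_one, map_add, hσq, hσu, hσσ]
  field_simp
  ring

lemma demazureLusztig_braid (hu0 : u ≠ 0) (hu1 : u ≠ 1) (hv0 : v ≠ 0) (hv1 : v ≠ 1)
    (huv : u * v ≠ 1) (hσq : σ q = q) (hτq : τ q = q) (hσu : σ u = u⁻¹) (hτv : τ v = v⁻¹)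
    (hσv : σ v = u * v) (hτu : τ u = u * v) (hσσ : σ (σ f) = f) (hττ : τ (τ f) = f)
    (hστ : τ (σ (τ f)) = σ (τ (σ f))) :
    demazureLusztig σ q u (demazureLusztig τ q v (demazureLusztig σ q u f)) =
      demazureLusztig τ q v (demazureLusztig σ q u (demazureLusztig τ q v f)) := by
  have : u - 1 ≠ 0 := sub_ne_zero.mpr hu1
  have : v - 1 ≠ 0 := sub_ne_zero.mpr hv1
  simp only [demazureLusztig, map_div₀, map_sub, map_mul, map_one, hσq, hτq, hσu, hτv, hσv,
    hτu, hσσ, hττ, hστ]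
  field_simp
  ring

lemma demazureLusztig_comm (hσq : σ q = q) (hτq : τ q = q) (hσv : σ v = v) (hτu : τ u = u)
    (hστ : σ (τ f) = τ (σ f)) :
    demazureLusztig σ q u (demazureLusztig τ q v f) =
      demazureLusztig τ q v (demazureLusztig σ q u f) := by
  simp only [demazureLusztig, map_div₀, map_sub, map_mul, map_one, hσq, hτq, hσv, hτu, hστ]
  ring

lemma demazureLusztig_mul_demazureLusztig (hu0 : u ≠ 0) (hu1 : u ≠ 1) (hσq : σ q = q)
    (hσu : σ u = u⁻¹) (hσm : σ m = m * u⁻¹) (hσσ : σ (σ f) = f) :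
    demazureLusztig σ q u (m * demazureLusztig σ q u f) = q * (σ m * f) := by
  have : u - 1 ≠ 0 := sub_ne_zero.mpr hu1
  simp only [demazureLusztig, map_div₀, map_sub, map_mul, map_one, hσq, hσu, hσm, hσσ]
  field_simp
  ring

lemma demazureLusztig_mul_of_map_eq (hσm : σ m = m) :
    demazureLusztig σ q u (m * f) = m * demazureLusztig σ q u f := by
  simp only [demazureLusztig, map_mul, hσm]
  ring

end DemazureLusztig

open AddMonoidAlgebra Equiv

noncomputable section

variable {n : ℕ}

lemma xpow_add (μ ν : Fin n →₀ ℤ) : xpow n (μ + ν) = xpow n μ * xpow n ν := by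
  simp [xpow, single_mul_single]

lemma xpow_ne_one {μ : Fin n →₀ ℤ} (hμ : μ ≠ 0) : xpow n μ ≠ 1 := by
  rwa [xpow, AddMonoidAlgebra.one_def, Ne, single_left_inj one_ne_zero]

def xunit (μ : Fin n →₀ ℤ) : (RL n)ˣ where
  val := xpow n μ
  inv := xpow n (-μ)
  val_inv := by rw [← xpow_add, add_neg_cancel]; rfl
  inv_val := by rw [← xpow_add, neg_add_cancel]; rfl

lemma val_xunit_zpow (μ : Fin n →₀ ℤ) (k : ℤ) :
    ((xunit μ ^ k : (RL n)ˣ) : RL n) = xpow n (k • μ) := by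
  induction k using Int.induction_on with
  | zero => rw [zpow_zero, Units.val_one, zero_smul]; rfl
  | succ k ih => rw [zpow_add_one, Units.val_mul, ih, add_smul, one_smul, xpow_add]; rfl
  | pred k ih =>
    rw [zpow_sub_one, Units.val_mul, ih, sub_smul, one_smul, sub_eq_add_neg, xpow_add]; rfl

lemma xpow_sub_one_dvd_xpow_zsmul_sub_one (μ : Fin n →₀ ℤ) (k : ℤ) :
    xpow n μ - 1 ∣ xpow n (k • μ) - 1 := by
  rw [← val_xunit_zpow]
  exact (xunit μ).sub_one_dvd_zpow_sub_one k

def permuteVars (e : Perm (Fin n)) : RL n ≃ₐ[KK] RL n :=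
  AddMonoidAlgebra.domCongr KK KK (Finsupp.domCongr e)

lemma sOp_eq_permuteVars (a b : Fin n) (f : RL n) : sOp a b f = permuteVars (swap a b) f := by
  ext μ
  simp [sOp, permuteVars, Finsupp.equivMapDomain_apply]

lemma permuteVars_single (e : Perm (Fin n)) (μ : Fin n →₀ ℤ) (c : KK) :
    permuteVars e (single μ c) = single (Finsupp.domCongr e μ) c :=
  domCongr_single _ _ _

lemma permuteVars_mul (e e' : Perm (Fin n)) (f : RL n) :
    permuteVars (e * e') f = permuteVars e (permuteVars e' f) := by
  induction f using AddMonoidAlgebra.induction_linear with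
  | zero => simp
  | add f g hf hg => simp only [map_add, hf, hg]
  | single μ c => simp [permuteVars_single, Perm.mul_def, Finsupp.equivMapDomain_trans]

lemma domCongr_dExp (e : Perm (Fin n)) (a b : Fin n) :
    Finsupp.domCongr e (dExp a b) = dExp (e a) (e b) := by
  simp [dExp, map_sub]

lemma dExp_ne_zero {a b : Fin n} (hab : a ≠ b) : dExp a b ≠ 0 := by
  intro h
  simpa [dExp, hab] using DFunLike.congr_fun h b

lemma dExp_add_dExp (a b c : Fin n) : dExp a b + dExp b c = dExp a c := by
  simp only [dExp]
  abel

lemma dExp_swap (a b : Fin n) : dExp b a = -dExp a b := by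
  rw [dExp, dExp, neg_sub]

lemma sOp_sOp (a b : Fin n) (f : RL n) : sOp a b (sOp a b f) = f := by
  simp only [sOp_eq_permuteVars, ← permuteVars_mul, swap_mul_self]
  simp [permuteVars, Perm.one_def, Finsupp.domCongr_refl]

lemma sOp_braid {a b c : Fin n} (hab : a ≠ b) (hac : a ≠ c) (hbc : b ≠ c) (f : RL n) :
    sOp a b (sOp b c (sOp a b f)) = sOp b c (sOp a b (sOp b c f)) := by
  simp only [sOp_eq_permuteVars, ← permuteVars_mul, ← mul_assoc]
  rw [swap_mul_swap_mul_swap hab hac, swap_comm a b, swap_comm b c,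
    swap_mul_swap_mul_swap hbc.symm hac.symm, swap_comm]

lemma sOp_comm {a b c d : Fin n} (hab : a ≠ b) (hcd : c ≠ d) (hac : a ≠ c) (had : a ≠ d)
    (hbc : b ≠ c) (hbd : b ≠ d) (f : RL n) :
    sOp a b (sOp c d f) = sOp c d (sOp a b f) := by
  simp only [sOp_eq_permuteVars, ← permuteVars_mul]
  rw [(Perm.disjoint_swap_swap (by simp [*])).commute.eq]

lemma domCongr_swap_eq_add {a b : Fin n} (hab : a ≠ b) (μ : Fin n →₀ ℤ) :
    Finsupp.domCongr (swap a b) μ = μ + (μ a - μ b) • dExp a b := by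
  ext x
  simp only [Finsupp.domCongr_apply, Finsupp.equivMapDomain_apply, symm_swap, dExp,
    Finsupp.add_apply, Finsupp.smul_apply, Finsupp.sub_apply, Finsupp.single_apply,
    swap_apply_def, smul_eq_mul]
  split_ifs <;> subst_vars <;> omega

lemma sOp_single {a b : Fin n} (hab : a ≠ b) (μ : Fin n →₀ ℤ) (c : KK) :
    sOp a b (single μ c) = single μ c * xpow n ((μ a - μ b) • dExp a b) := by
  rw [sOp_eq_permuteVars, permuteVars_single, domCongr_swap_eq_add hab, xpow, single_mul_single,
    mul_one]

lemma divBy_mul {d : RL n} (hd : d ≠ 0) (g : RL n) : divBy d (d * g) = g := by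
  have hdvd : d ∣ d * g := dvd_mul_right d g
  rw [divBy, dif_pos hdvd]
  exact mul_left_cancel₀ hd hdvd.choose_spec.symm

def dlNumerator (a b : Fin n) (f : RL n) : RL n :=
  (1 - qc n) * f - (1 - qc n * xpow n (dExp a b)) * sOp a b f

lemma xpow_dExp_sub_one_dvd_dlNumerator {a b : Fin n} (hab : a ≠ b) (f : RL n) :
    xpow n (dExp a b) - 1 ∣ dlNumerator a b f := by
  induction f using AddMonoidAlgebra.induction_linear with
  | zero => simp [dlNumerator, sOp_eq_permuteVars]
  | add f g hf hg =>
    have hadd : dlNumerator a b (f + g) = dlNumerator a b f + dlNumerator a b g := by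
      simp only [dlNumerator, sOp_eq_permuteVars, map_add]
      ring
    exact hadd ▸ dvd_add hf hg
  | single μ c =>
    set z := xpow n (dExp a b)
    set w := xpow n ((μ a - μ b) • dExp a b)
    have hmono : dlNumerator a b (single μ c) =
        single μ c * ((qc n * z - 1) * (w - 1) + qc n * (z - 1)) := by
      rw [dlNumerator, sOp_single hab]
      ring
    rw [hmono]
    exact (dvd_add ((xpow_sub_one_dvd_xpow_zsmul_sub_one _ _).mul_left _)
      (dvd_mul_left _ _)).mul_left _

section FractionField

local notation "ι" => algebraMap (RL n) (FractionRing (RL n))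

lemma algebraMap_xpow_neg (μ : Fin n →₀ ℤ) : ι (xpow n (-μ)) = (ι (xpow n μ))⁻¹ :=
  eq_inv_of_mul_eq_one_left (by rw [← map_mul, ← xpow_add, neg_add_cancel]; exact map_one ι)

lemma algebraMap_xpow_ne_zero (μ : Fin n →₀ ℤ) : ι (xpow n μ) ≠ 0 :=
  ((xunit μ).isUnit.map ι).ne_zero

lemma algebraMap_xpow_ne_one {μ : Fin n →₀ ℤ} (hμ : μ ≠ 0) : ι (xpow n μ) ≠ 1 := by
  rw [← map_one ι, (IsFractionRing.injective (RL n) _).ne_iff]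
  exact xpow_ne_one hμ

def swapFrac (a b : Fin n) : FractionRing (RL n) →+* FractionRing (RL n) :=
  (IsFractionRing.ringEquivOfRingEquiv (K := FractionRing (RL n)) (L := FractionRing (RL n))
    (permuteVars (swap a b)).toRingEquiv).toRingHom

lemma swapFrac_algebraMap (a b : Fin n) (f : RL n) : swapFrac a b (ι f) = ι (sOp a b f) := by
  rw [sOp_eq_permuteVars]
  exact IsFractionRing.ringEquivOfRingEquiv_algebraMap _ _

lemma swapFrac_qc (a b : Fin n) : swapFrac a b (ι (qc n)) = ι (qc n) := by
  rw [swapFrac_algebraMap, sOp_eq_permuteVars, qc, permuteVars_single, map_zero]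

lemma swapFrac_xpow (a b : Fin n) (μ : Fin n →₀ ℤ) :
    swapFrac a b (ι (xpow n μ)) = ι (xpow n (Finsupp.domCongr (swap a b) μ)) := by
  rw [swapFrac_algebraMap, sOp_eq_permuteVars, xpow, permuteVars_single]
  rfl

lemma swapFrac_xpow_single (a b j : Fin n) (m : ℤ) :
    swapFrac a b (ι (xpow n (Finsupp.single j m))) =
      ι (xpow n (Finsupp.single (swap a b j) m)) := by
  rw [swapFrac_xpow, Finsupp.domCongr_apply, Finsupp.equivMapDomain_single]

lemma swapFrac_xpow_dExp (a b c d : Fin n) :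
    swapFrac a b (ι (xpow n (dExp c d))) = ι (xpow n (dExp (swap a b c) (swap a b d))) := by
  rw [swapFrac_xpow, domCongr_dExp]

lemma swapFrac_xpow_dExp_self (a b : Fin n) :
    swapFrac a b (ι (xpow n (dExp a b))) = (ι (xpow n (dExp a b)))⁻¹ := by
  rw [swapFrac_xpow_dExp, swap_apply_left, swap_apply_right, dExp_swap, algebraMap_xpow_neg]

lemma algebraMap_DLop {a b : Fin n} (hab : a ≠ b) (f : RL n) :
    ι (DLop a b f) =
      demazureLusztig (swapFrac a b) (ι (qc n)) (ι (xpow n (dExp a b))) (ι f) := by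
  obtain ⟨g, hg⟩ := xpow_dExp_sub_one_dvd_dlNumerator hab f
  have hz : ι (xpow n (dExp a b)) - 1 ≠ 0 :=
    sub_ne_zero.mpr (algebraMap_xpow_ne_one (dExp_ne_zero hab))
  have hDL : DLop a b f = g := by
    rw [DLop, ← dlNumerator, hg, divBy_mul (sub_ne_zero.mpr (xpow_ne_one (dExp_ne_zero hab)))]
  rw [hDL, demazureLusztig, eq_div_iff hz, swapFrac_algebraMap]
  have := congrArg ι hg
  simp only [dlNumerator, map_sub, map_mul, map_one] at this
  linear_combination -this

lemma swapFrac_swapFrac (a b : Fin n) (f : RL n) :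
    swapFrac a b (swapFrac a b (ι f)) = ι f := by
  rw [swapFrac_algebraMap, swapFrac_algebraMap, sOp_sOp]

lemma DLop_quadratic {a b : Fin n} (hab : a ≠ b) (f : RL n) :
    DLop a b (DLop a b f + f) - qc n * (DLop a b f + f) = 0 := by
  apply IsFractionRing.injective (RL n) (FractionRing (RL n))
  rw [map_zero, map_sub, map_mul, map_add, algebraMap_DLop hab, map_add, algebraMap_DLop hab]
  exact demazureLusztig_quadratic _ _ (algebraMap_xpow_ne_zero _)
    (algebraMap_xpow_ne_one (dExp_ne_zero hab)) (swapFrac_qc a b)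
    (swapFrac_xpow_dExp_self a b) (swapFrac_swapFrac a b f)

lemma DLop_braid {a b c : Fin n} (hab : a ≠ b) (hac : a ≠ c) (hbc : b ≠ c) (f : RL n) :
    DLop a b (DLop b c (DLop a b f)) = DLop b c (DLop a b (DLop b c f)) := by
  apply IsFractionRing.injective (RL n) (FractionRing (RL n))
  simp only [algebraMap_DLop hab, algebraMap_DLop hbc]
  have hprod : ι (xpow n (dExp a b)) * ι (xpow n (dExp b c)) = ι (xpow n (dExp a c)) := by
    rw [← map_mul, ← xpow_add, dExp_add_dExp]
  refine demazureLusztig_braid _ _ _ (algebraMap_xpow_ne_zero _)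
    (algebraMap_xpow_ne_one (dExp_ne_zero hab)) (algebraMap_xpow_ne_zero _)
    (algebraMap_xpow_ne_one (dExp_ne_zero hbc))
    (hprod ▸ algebraMap_xpow_ne_one (dExp_ne_zero hac)) (swapFrac_qc a b) (swapFrac_qc b c)
    (swapFrac_xpow_dExp_self a b) (swapFrac_xpow_dExp_self b c) ?_ ?_
    (swapFrac_swapFrac a b f) (swapFrac_swapFrac b c f) ?_
  · rw [hprod, swapFrac_xpow_dExp, swap_apply_right, swap_apply_of_ne_of_ne hac.symm hbc.symm]
  · rw [hprod, swapFrac_xpow_dExp, swap_apply_of_ne_of_ne hab hac, swap_apply_left]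
  · simp only [swapFrac_algebraMap, sOp_braid hab hac hbc]

lemma DLop_comm {a b c d : Fin n} (hab : a ≠ b) (hcd : c ≠ d) (hac : a ≠ c) (had : a ≠ d)
    (hbc : b ≠ c) (hbd : b ≠ d) (f : RL n) :
    DLop a b (DLop c d f) = DLop c d (DLop a b f) := by
  apply IsFractionRing.injective (RL n) (FractionRing (RL n))
  simp only [algebraMap_DLop hab, algebraMap_DLop hcd]
  refine demazureLusztig_comm _ _ _ (swapFrac_qc a b) (swapFrac_qc c d) ?_ ?_ ?_
  · rw [swapFrac_xpow_dExp, swap_apply_of_ne_of_ne hac.symm hbc.symm,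
      swap_apply_of_ne_of_ne had.symm hbd.symm]
  · rw [swapFrac_xpow_dExp, swap_apply_of_ne_of_ne hac had, swap_apply_of_ne_of_ne hbc hbd]
  · simp only [swapFrac_algebraMap, sOp_comm hab hcd hac had hbc hbd]

lemma DLop_Xop_DLop {a b : Fin n} (hab : a ≠ b) (f : RL n) :
    DLop a b (Xop a (DLop a b f)) = qc n * Xop b f := by
  apply IsFractionRing.injective (RL n) (FractionRing (RL n))
  have hσx : swapFrac a b (ι (xpow n (Finsupp.single a (-1)))) =
      ι (xpow n (Finsupp.single b (-1))) := by
    rw [swapFrac_xpow_single, swap_apply_left]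
  have hx : ι (xpow n (Finsupp.single b (-1))) =
      ι (xpow n (Finsupp.single a (-1))) * (ι (xpow n (dExp a b)))⁻¹ := by
    rw [← algebraMap_xpow_neg, ← map_mul, ← xpow_add, dExp, Finsupp.single_neg,
      Finsupp.single_neg]
    congr 2
    abel
  simp only [Xop, map_mul, algebraMap_DLop hab]
  rw [demazureLusztig_mul_demazureLusztig _ _ (algebraMap_xpow_ne_zero _)
    (algebraMap_xpow_ne_one (dExp_ne_zero hab)) (swapFrac_qc a b)
    (swapFrac_xpow_dExp_self a b) (hσx.trans hx) (swapFrac_swapFrac a b f), hσx]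

lemma DLop_Xop_comm {a b j : Fin n} (hab : a ≠ b) (hja : j ≠ a) (hjb : j ≠ b) (f : RL n) :
    DLop a b (Xop j f) = Xop j (DLop a b f) := by
  apply IsFractionRing.injective (RL n) (FractionRing (RL n))
  simp only [Xop, map_mul, algebraMap_DLop hab]
  refine demazureLusztig_mul_of_map_eq _ _ ?_
  rw [swapFrac_xpow_single, swap_apply_of_ne_of_ne hja hjb]

end FractionField

end

/-- Statement 10: the Demazure–Lusztig operators are well defined ((a): divisibility) and
satisfy the defining relations of the extended affine Hecke algebra `H_n` of `GL_n`:
(b) the quadratic relation, (c) the braid relations, (d) the relations involving the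
`X_j`'s. -/
theorem demazure_lusztig_hecke_relations (n : ℕ) :
    -- (a) well-definedness: the numerator of `T_i f` is divisible by `x_{i+1}x_i⁻¹ − 1`
    (∀ (i : ℕ) (hi : i + 1 < n) (f : RL n),
      (xpow n (dExp (⟨i, by omega⟩ : Fin n) ⟨i + 1, hi⟩) - 1) ∣
        ((1 - qc n) * f -
          (1 - qc n * xpow n (dExp (⟨i, by omega⟩ : Fin n) ⟨i + 1, hi⟩)) *
            sOp (⟨i, by omega⟩ : Fin n) ⟨i + 1, hi⟩ f))
    -- (b) `(T_i − q)(T_i + 1) = 0`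
    ∧ (∀ (i : ℕ) (hi : i + 1 < n) (f : RL n),
        DLop (⟨i, by omega⟩ : Fin n) ⟨i + 1, hi⟩
            (DLop (⟨i, by omega⟩ : Fin n) ⟨i + 1, hi⟩ f + f)
          - qc n * (DLop (⟨i, by omega⟩ : Fin n) ⟨i + 1, hi⟩ f + f) = 0)
    -- (c) braid relations
    ∧ (∀ (i : ℕ) (hi : i + 2 < n) (f : RL n),
        DLop (⟨i, by omega⟩ : Fin n) ⟨i + 1, by omega⟩
            (DLop (⟨i + 1, by omega⟩ : Fin n) ⟨i + 2, hi⟩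
              (DLop (⟨i, by omega⟩ : Fin n) ⟨i + 1, by omega⟩ f))
          = DLop (⟨i + 1, by omega⟩ : Fin n) ⟨i + 2, hi⟩
              (DLop (⟨i, by omega⟩ : Fin n) ⟨i + 1, by omega⟩
                (DLop (⟨i + 1, by omega⟩ : Fin n) ⟨i + 2, hi⟩ f)))
    ∧ (∀ (i j : ℕ) (hi : i + 1 < n) (hj : j + 1 < n), i + 2 ≤ j → ∀ f : RL n,
        DLop (⟨i, by omega⟩ : Fin n) ⟨i + 1, hi⟩
            (DLop (⟨j, by omega⟩ : Fin n) ⟨j + 1, hj⟩ f)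
          = DLop (⟨j, by omega⟩ : Fin n) ⟨j + 1, hj⟩
              (DLop (⟨i, by omega⟩ : Fin n) ⟨i + 1, hi⟩ f))
    -- (d) relations with the `X_j`
    ∧ (∀ (j k : Fin n) (f : RL n), Xop j (Xop k f) = Xop k (Xop j f))
    ∧ (∀ (i : ℕ) (hi : i + 1 < n) (f : RL n),
        DLop (⟨i, by omega⟩ : Fin n) ⟨i + 1, hi⟩
            (Xop (⟨i, by omega⟩ : Fin n)
              (DLop (⟨i, by omega⟩ : Fin n) ⟨i + 1, hi⟩ f))
          = qc n * Xop (⟨i + 1, hi⟩ : Fin n) f)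
    ∧ (∀ (i : ℕ) (hi : i + 1 < n) (j : Fin n), (j : ℕ) ≠ i → (j : ℕ) ≠ i + 1 →
        ∀ f : RL n,
          DLop (⟨i, by omega⟩ : Fin n) ⟨i + 1, hi⟩ (Xop j f)
            = Xop j (DLop (⟨i, by omega⟩ : Fin n) ⟨i + 1, hi⟩ f)) := by
  refine ⟨fun i hi f => xpow_dExp_sub_one_dvd_dlNumerator (by simp) f,
    fun i hi f => DLop_quadratic (by simp) f,
    fun i hi f => DLop_braid (by simp) (by simp) (by simp) f,
    fun i j hi hj hij f => DLop_comm (by simp) (by simp) (by simp; omega) (by simp; omega)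
      (by simp; omega) (by simp; omega) f,
    fun j k f => mul_left_comm _ _ f,
    fun i hi f => DLop_Xop_DLop (by simp) f,
    fun i hi j hji hji' f =>
      DLop_Xop_comm (by simp) (Fin.ne_of_val_ne hji) (Fin.ne_of_val_ne hji') f⟩
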